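/- arXiv:1705.01186 — 7 statements merged into one kernel-verified Lean document; each statement's English description precedes it below -/
import Mathlib

section
/- Let A and B be 2×2 Hermitian matrices with eigenvalues α₁ ≥ α₂ and β₁ ≥ β₂ respectively. Then the eigenvalues γ₁ ≥ γ₂ of C = A + B satisfy γ₁ + γ₂ = α₁ + α₂ + β₁ + β₂ and |（α₁−α₂）−（β₁−β₂）| ≤ γ₁ − γ₂ ≤ (α₁−α₂) + (β₁−β₂). -/
/-!
In the Loewner order a Hermitian matrix lies below `r • 1` (above `r • 1`) exactly when all of
its eigenvalues are `≤ r` (`≥ r`). Hence `A + B ≤ (α₁ + β₁) • 1` gives `γ₁ ≤ α₁ + β₁`, while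
`A = (A + B) - B ≤ (γ₁ - β₂) • 1` gives `α₁ + β₂ ≤ γ₁`, and symmetrically `α₂ + β₁ ≤ γ₁`.
With the trace identity `γ₁ + γ₂ = α₁ + α₂ + β₁ + β₂` these are the claimed inequalities.
-/

open Matrix

/-- `A` (Hermitian, with diagonalization witness `hA`) has eigenvalues given by the tuple `a`,
up to a permutation. -/
def eigsEq {n : ℕ} {A : Matrix (Fin n) (Fin n) ℂ} (hA : A.IsHermitian) (a : Fin n → ℝ) : Prop :=
  ∃ σ : Equiv.Perm (Fin n), ∀ i, hA.eigenvalues (σ i) = a i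

open scoped MatrixOrder

namespace Matrix.IsHermitian

variable {𝕜 ι : Type*} [RCLike 𝕜] [Fintype ι] [DecidableEq ι] {M : Matrix ι ι 𝕜}

theorem le_algebraMap_iff (hM : M.IsHermitian) {r : ℝ} :
    M ≤ algebraMap ℝ _ r ↔ r ∈ upperBounds (Set.range hM.eigenvalues) := by
  rw [le_algebraMap_iff_spectrum_le hM.isSelfAdjoint, hM.spectrum_real_eq_range_eigenvalues]
  rfl

theorem algebraMap_le_iff (hM : M.IsHermitian) {r : ℝ} :
    algebraMap ℝ _ r ≤ M ↔ r ∈ lowerBounds (Set.range hM.eigenvalues) := by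
  rw [algebraMap_le_iff_le_spectrum hM.isSelfAdjoint, hM.spectrum_real_eq_range_eigenvalues]
  rfl

end Matrix.IsHermitian

namespace eigsEq

variable {n : ℕ} {A : Matrix (Fin n) (Fin n) ℂ} {hA : A.IsHermitian} {a : Fin n → ℝ}

theorem range_eigenvalues (h : eigsEq hA a) : Set.range hA.eigenvalues = Set.range a := by
  obtain ⟨σ, hσ⟩ := h
  rw [← funext hσ]
  exact (σ.surjective.range_comp _).symm

theorem le_algebraMap_iff (h : eigsEq hA a) {r : ℝ} :
    A ≤ algebraMap ℝ _ r ↔ ∀ i, a i ≤ r := by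
  rw [hA.le_algebraMap_iff, h.range_eigenvalues, mem_upperBounds, Set.forall_mem_range]

theorem algebraMap_le_iff (h : eigsEq hA a) {r : ℝ} :
    algebraMap ℝ _ r ≤ A ↔ ∀ i, r ≤ a i := by
  rw [hA.algebraMap_le_iff, h.range_eigenvalues, mem_lowerBounds, Set.forall_mem_range]

theorem trace_eq (h : eigsEq hA a) : A.trace = ∑ i, (a i : ℂ) := by
  obtain ⟨σ, hσ⟩ := h
  rw [hA.trace_eq_sum_eigenvalues, ← Equiv.sum_comp σ]
  simp only [hσ, RCLike.ofReal_eq_complex_ofReal]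

end eigsEq

/-- Horn's problem for `n = 2`: necessity of the trace identity and triangle inequalities. -/
theorem horn_n2_necessity (α₁ α₂ β₁ β₂ γ₁ γ₂ : ℝ)
    (hα : α₂ ≤ α₁) (hβ : β₂ ≤ β₁) (hγ : γ₂ ≤ γ₁)
    (A B : Matrix (Fin 2) (Fin 2) ℂ) (hA : A.IsHermitian) (hB : B.IsHermitian)
    (hAe : eigsEq hA ![α₁, α₂]) (hBe : eigsEq hB ![β₁, β₂])
    (hCe : eigsEq (hA.add hB) ![γ₁, γ₂]) :
    γ₁ + γ₂ = α₁ + α₂ + β₁ + β₂ ∧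
    |(α₁ - α₂) - (β₁ - β₂)| ≤ γ₁ - γ₂ ∧ γ₁ - γ₂ ≤ (α₁ - α₂) + (β₁ - β₂) := by
  have hA_le : A ≤ algebraMap ℝ _ α₁ := hAe.le_algebraMap_iff.2 <| by simp [Fin.forall_fin_two, hα]
  have hA_ge : algebraMap ℝ _ α₂ ≤ A := hAe.algebraMap_le_iff.2 <| by simp [Fin.forall_fin_two, hα]
  have hB_le : B ≤ algebraMap ℝ _ β₁ := hBe.le_algebraMap_iff.2 <| by simp [Fin.forall_fin_two, hβ]
  have hB_ge : algebraMap ℝ _ β₂ ≤ B := hBe.algebraMap_le_iff.2 <| by simp [Fin.forall_fin_two, hβ]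
  have hC_le : A + B ≤ algebraMap ℝ _ γ₁ :=
    hCe.le_algebraMap_iff.2 <| by simp [Fin.forall_fin_two, hγ]
  have weyl₁ : γ₁ ≤ α₁ + β₁ :=
    hCe.le_algebraMap_iff.1 (by simpa using add_le_add hA_le hB_le) 0
  have weyl₂ : α₁ ≤ γ₁ - β₂ :=
    hAe.le_algebraMap_iff.1 (by simpa using sub_le_sub hC_le hB_ge) 0
  have weyl₃ : β₁ ≤ γ₁ - α₂ :=
    hBe.le_algebraMap_iff.1 (by simpa using sub_le_sub hC_le hA_ge) 0
  have htrace : γ₁ + γ₂ = α₁ + α₂ + β₁ + β₂ := by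
    have h := trace_add A B
    simp only [hCe.trace_eq, hAe.trace_eq, hBe.trace_eq, Fin.sum_univ_two, cons_val_zero,
      cons_val_one] at h
    norm_cast at h
    linarith
  exact ⟨htrace, abs_le.2 ⟨by linarith, by linarith⟩, by linarith⟩
end

section
/- For any real numbers α₁ ≥ α₂, β₁ ≥ β₂, and any γ₁ ≥ γ₂ with γ₁ + γ₂ = α₁ + α₂ + β₁ + β₂ and |（α₁−α₂）−（β₁−β₂）| ≤ γ₁ − γ₂ ≤ (α₁−α₂)+(β₁−β₂), there exist 2×2 Hermitian matrices A with eigenvalues α₁, α₂ and B with eigenvalues β₁, β₂ such that A + B has eigenvalues γ₁, γ₂. -/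
/-
Take `A = diag(α₁, α₂)` and `B = [[p, q], [q, β₁ + β₂ - p]]` real symmetric. A 2×2 Hermitian
matrix is determined up to eigenvalue order by its trace and determinant, so `B` has eigenvalues
`β₁, β₂` as soon as `q² = (p - β₂)(β₁ - p)`, which is solvable for `p` between `β₂` and `β₁`.
With this choice `det (A + B)` is affine in `p`, running from `(α₁ + β₂)(α₂ + β₁)` to
`(α₁ + β₁)(α₂ + β₂)`, and since `4 γ₁ γ₂ = (γ₁ + γ₂)² - (γ₁ - γ₂)²` the Horn inequalities say
exactly that `γ₁ γ₂` lies between these values. The intermediate value theorem gives `p`.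
-/

open Matrix

open Set

theorem eq_and_eq_or_eq_and_eq_of_add_eq_of_mul_eq {R : Type*} [CommRing R] [NoZeroDivisors R]
    {x y a b : R} (hs : x + y = a + b) (hp : x * y = a * b) : x = a ∧ y = b ∨ x = b ∧ y = a := by
  have : (x - a) * (x - b) = 0 := by linear_combination x * hs - hp
  rcases mul_eq_zero.mp this with h | h
  · obtain rfl := sub_eq_zero.mp h
    exact .inl ⟨rfl, add_left_cancel hs⟩
  · obtain rfl := sub_eq_zero.mp h
    exact .inr ⟨rfl, add_left_cancel (hs.trans (add_comm _ _))⟩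

theorem eigsEq_of_trace_of_det {A : Matrix (Fin 2) (Fin 2) ℂ} (hA : A.IsHermitian) {l₁ l₂ : ℝ}
    (htr : A.trace = (l₁ + l₂ : ℝ)) (hdet : A.det = (l₁ * l₂ : ℝ)) : eigsEq hA ![l₁, l₂] := by
  rw [hA.trace_eq_sum_eigenvalues, Fin.sum_univ_two] at htr
  rw [hA.det_eq_prod_eigenvalues, Fin.prod_univ_two] at hdet
  have hs : hA.eigenvalues 0 + hA.eigenvalues 1 = l₁ + l₂ := by simpa using congrArg Complex.re htr
  have hp : hA.eigenvalues 0 * hA.eigenvalues 1 = l₁ * l₂ := by simpa using congrArg Complex.re hdet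
  rcases eq_and_eq_or_eq_and_eq_of_add_eq_of_mul_eq hs hp with ⟨h₀, h₁⟩ | ⟨h₀, h₁⟩
  · exact ⟨1, fun i => by fin_cases i <;> simpa⟩
  · exact ⟨Equiv.swap 0 1, fun i => by fin_cases i <;> simpa⟩

def realSymm (a b c : ℝ) : Matrix (Fin 2) (Fin 2) ℂ := !![(a : ℂ), b; b, c]

theorem isHermitian_realSymm (a b c : ℝ) : (realSymm a b c).IsHermitian := by
  ext i j
  fin_cases i <;> fin_cases j <;> simp [realSymm]

theorem trace_realSymm (a b c : ℝ) : (realSymm a b c).trace = (a + c : ℝ) := by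
  simp [realSymm, trace_fin_two]

theorem det_realSymm (a b c : ℝ) : (realSymm a b c).det = (a * c - b ^ 2 : ℝ) := by
  simp [realSymm, det_fin_two, sq]

theorem realSymm_add_realSymm (a b c a' b' c' : ℝ) :
    realSymm a b c + realSymm a' b' c' = realSymm (a + a') (b + b') (c + c') := by
  ext i j
  fin_cases i <;> fin_cases j <;> simp [realSymm]

theorem exists_det_eq_of_mem_Icc {α₁ α₂ β₁ β₂ c : ℝ}
    (hc : c ∈ Icc ((α₁ + β₁) * (α₂ + β₂)) ((α₁ + β₂) * (α₂ + β₁))) :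
    ∃ p q : ℝ, p * (β₁ + β₂ - p) - q ^ 2 = β₁ * β₂ ∧
      (α₁ + p) * (α₂ + β₁ + β₂ - p) - q ^ 2 = c := by
  have hf : ContinuousOn (fun p => (α₁ + p) * (α₂ + β₁ + β₂ - p) - (p - β₂) * (β₁ - p))
      (uIcc β₂ β₁) := by fun_prop
  obtain ⟨p, hp, hfp⟩ := intermediate_value_uIcc hf
    (Icc_subset_uIcc' (show c ∈ Icc _ _ from ⟨by linarith [hc.1], by linarith [hc.2]⟩))
  have hq : 0 ≤ (p - β₂) * (β₁ - p) := by
    rcases mem_uIcc.mp hp with ⟨h, h'⟩ | ⟨h, h'⟩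
    · exact mul_nonneg (by linarith) (by linarith)
    · exact mul_nonneg_of_nonpos_of_nonpos (by linarith) (by linarith)
  refine ⟨p, √((p - β₂) * (β₁ - p)), ?_, ?_⟩ <;> rw [Real.sq_sqrt hq]
  · ring
  · exact hfp

theorem mul_mem_Icc_of_abs_sub_le_of_le_add {α₁ α₂ β₁ β₂ γ₁ γ₂ : ℝ}
    (htr : γ₁ + γ₂ = α₁ + α₂ + β₁ + β₂)
    (h1 : |(α₁ - α₂) - (β₁ - β₂)| ≤ γ₁ - γ₂)
    (h2 : γ₁ - γ₂ ≤ (α₁ - α₂) + (β₁ - β₂)) :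
    γ₁ * γ₂ ∈ Icc ((α₁ + β₁) * (α₂ + β₂)) ((α₁ + β₂) * (α₂ + β₁)) := by
  have hg := (abs_nonneg _).trans h1
  have hlo := sq_le_sq' (abs_le.mp h1).1 (abs_le.mp h1).2
  have hhi := pow_le_pow_left₀ hg h2 2
  constructor
  · linear_combination (hhi - (γ₁ + γ₂ + α₁ + α₂ + β₁ + β₂) * htr) / 4
  · linear_combination (hlo + (γ₁ + γ₂ + α₁ + α₂ + β₁ + β₂) * htr) / 4

theorem horn_n2_sufficiency_general (α₁ α₂ β₁ β₂ γ₁ γ₂ : ℝ)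
    (htr : γ₁ + γ₂ = α₁ + α₂ + β₁ + β₂)
    (h1 : |(α₁ - α₂) - (β₁ - β₂)| ≤ γ₁ - γ₂)
    (h2 : γ₁ - γ₂ ≤ (α₁ - α₂) + (β₁ - β₂)) :
    ∃ (A B : Matrix (Fin 2) (Fin 2) ℂ) (hA : A.IsHermitian) (hB : B.IsHermitian),
      eigsEq hA ![α₁, α₂] ∧ eigsEq hB ![β₁, β₂] ∧ eigsEq (hA.add hB) ![γ₁, γ₂] := by
  obtain ⟨p, q, hdetB, hdetAB⟩ :=
    exists_det_eq_of_mem_Icc (mul_mem_Icc_of_abs_sub_le_of_le_add htr h1 h2)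
  refine ⟨realSymm α₁ 0 α₂, realSymm p q (β₁ + β₂ - p),
    isHermitian_realSymm _ _ _, isHermitian_realSymm _ _ _, ?_, ?_, ?_⟩
  · exact eigsEq_of_trace_of_det _ (trace_realSymm _ _ _) (by rw [det_realSymm]; congr 1; ring)
  · exact eigsEq_of_trace_of_det _ (by rw [trace_realSymm]; congr 1; ring)
      (by rw [det_realSymm, ← hdetB])
  · apply eigsEq_of_trace_of_det
    · rw [realSymm_add_realSymm, trace_realSymm]; congr 1; linarith
    · rw [realSymm_add_realSymm, det_realSymm, ← hdetAB]; congr 1; ring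

/-- Horn's problem for `n = 2`: sufficiency of the trace identity and triangle inequalities. -/
theorem horn_n2_sufficiency (α₁ α₂ β₁ β₂ γ₁ γ₂ : ℝ)
    (hα : α₂ ≤ α₁) (hβ : β₂ ≤ β₁) (hγ : γ₂ ≤ γ₁)
    (htr : γ₁ + γ₂ = α₁ + α₂ + β₁ + β₂)
    (h1 : |(α₁ - α₂) - (β₁ - β₂)| ≤ γ₁ - γ₂)
    (h2 : γ₁ - γ₂ ≤ (α₁ - α₂) + (β₁ - β₂)) :
    ∃ (A B : Matrix (Fin 2) (Fin 2) ℂ) (hA : A.IsHermitian) (hB : B.IsHermitian),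
      eigsEq hA ![α₁, α₂] ∧ eigsEq hB ![β₁, β₂] ∧ eigsEq (hA.add hB) ![γ₁, γ₂] :=
  horn_n2_sufficiency_general α₁ α₂ β₁ β₂ γ₁ γ₂ htr h1 h2
end

section
/- Let α₁ > α₂ > α₃, β₁ > β₂ > β₃ and γ₁ ≥ γ₂ ≥ γ₃ be real numbers with γ₁+γ₂+γ₃ = Σαᵢ + Σβᵢ. If γ is the spectrum of A + B for some 3×3 Hermitian matrices A, B with spectra α, β, then: α₃+β₃ ≤ γ₃ ≤ min(α₁+β₃, α₂+β₂, α₃+β₁), max(α₂+β₃, α₃+β₂) ≤ γ₂ ≤ min(α₁+β₂, α₂+β₁), and max(α₁+β₃, α₂+β₂, α₃+β₁) ≤ γ₁ ≤ α₁+β₁. -/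
/-!
Every inequality is an instance of Weyl's inequality `γ_{i+j-1} ≤ α_i + β_j` or of its dual
`α_i + β_j ≤ γ_{i+j-3}`. For Weyl's inequality, the eigenvectors of `A` for `α_i, …, α_3`, those of
`B` for `β_j, …, β_3` and those of `A + B` for `γ_1, …, γ_{i+j-1}` span subspaces of `ℂ³` whose
dimensions add up to `7 > 2 · 3`, so the three subspaces share a unit vector `x`; expanding the
Rayleigh quotients in the eigenbases gives
`γ_{i+j-1} ≤ ⟪x, (A + B) x⟫ = ⟪x, A x⟫ + ⟪x, B x⟫ ≤ α_i + β_j`.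
The dual inequality is Weyl's inequality for `-A` and `-B`.
-/

open Matrix

open Finset Module InnerProductSpace

theorem Submodule.exists_ne_zero_mem_inf_inf {K V : Type*} [DivisionRing K] [AddCommGroup V]
    [Module K V] [FiniteDimensional K V] (U₁ U₂ U₃ : Submodule K V)
    (h : 2 * finrank K V < finrank K U₁ + finrank K U₂ + finrank K U₃) :
    ∃ x ∈ U₁ ⊓ U₂ ⊓ U₃, x ≠ 0 := by
  refine Submodule.exists_mem_ne_zero_of_ne_bot fun hbot => ?_
  have h₁₂ := finrank_sup_add_finrank_inf_eq U₁ U₂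
  have h₁₂₃ := finrank_sup_add_finrank_inf_eq (U₁ ⊓ U₂) U₃
  have := (U₁ ⊔ U₂).finrank_le
  have := (U₁ ⊓ U₂ ⊔ U₃).finrank_le
  rw [hbot, finrank_bot] at h₁₂₃
  omega

namespace OrthonormalBasis

variable {𝕜 E ι : Type*} [RCLike 𝕜] [NormedAddCommGroup E] [InnerProductSpace 𝕜 E] [Fintype ι]
  {b : OrthonormalBasis ι 𝕜 E}

theorem inner_eq_zero_of_mem_span_image {S : Set ι} {x : E}
    (hx : x ∈ Submodule.span 𝕜 (b '' S)) {i : ι} (hi : i ∉ S) : ⟪b i, x⟫_𝕜 = 0 := by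
  induction hx using Submodule.span_induction with
  | mem y hy =>
    obtain ⟨j, hj, rfl⟩ := hy
    exact b.orthonormal.2 fun h => hi (h ▸ hj)
  | zero => exact inner_zero_right _
  | add y z _ _ hy hz => rw [inner_add_right, hy, hz, add_zero]
  | smul c y _ hy => rw [inner_smul_right, hy, mul_zero]

theorem finrank_span_image (S : Finset ι) :
    finrank 𝕜 (Submodule.span 𝕜 (b '' S)) = #S := by
  have := finrank_span_eq_card
    (b.orthonormal.linearIndependent.comp (Subtype.val : (↑S : Set ι) → ι) Subtype.val_injective)
  rw [Set.image_eq_range]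
  simpa only [Function.comp_def, Finset.coe_sort_coe, Fintype.card_coe] using this

variable {T : E →ₗ[𝕜] E} {μ : ι → ℝ}

theorem re_inner_map_self_eq_sum (hb : ∀ i, T (b i) = (μ i : 𝕜) • b i) (x : E) :
    RCLike.re ⟪x, T x⟫_𝕜 = ∑ i, μ i * ‖⟪b i, x⟫_𝕜‖ ^ 2 := by
  conv_lhs => rw [← b.sum_repr' x]
  simp only [map_sum, map_smul, hb, smul_smul, inner_sum, inner_smul_right,
    b.orthonormal.inner_left_fintype]
  refine sum_congr rfl fun i _ => ?_
  rw [mul_right_comm, RCLike.mul_conj, ← RCLike.ofReal_pow, ← RCLike.ofReal_mul, RCLike.ofReal_re,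
    mul_comm]

theorem re_inner_map_self_le_of_mem_span (hb : ∀ i, T (b i) = (μ i : 𝕜) • b i) {S : Finset ι}
    {c : ℝ} (hc : ∀ i ∈ S, μ i ≤ c) {x : E} (hx : x ∈ Submodule.span 𝕜 (b '' S)) :
    RCLike.re ⟪x, T x⟫_𝕜 ≤ c * ‖x‖ ^ 2 := by
  rw [re_inner_map_self_eq_sum hb, ← b.sum_sq_norm_inner_right, mul_sum]
  refine sum_le_sum fun i _ => ?_
  by_cases hi : i ∈ S
  · exact mul_le_mul_of_nonneg_right (hc i hi) (sq_nonneg _)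
  · rw [b.inner_eq_zero_of_mem_span_image hx (mod_cast hi)]
    simp

theorem le_re_inner_map_self_of_mem_span (hb : ∀ i, T (b i) = (μ i : 𝕜) • b i) {S : Finset ι}
    {c : ℝ} (hc : ∀ i ∈ S, c ≤ μ i) {x : E} (hx : x ∈ Submodule.span 𝕜 (b '' S)) :
    c * ‖x‖ ^ 2 ≤ RCLike.re ⟪x, T x⟫_𝕜 := by
  have hneg := re_inner_map_self_le_of_mem_span (T := -T) (μ := -μ) (by simp [hb])
    (fun i hi => neg_le_neg (hc i hi)) hx
  simp only [LinearMap.neg_apply, inner_neg_right, map_neg, neg_mul] at hneg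
  linarith

end OrthonormalBasis

section Weyl

variable {𝕜 E : Type*} [RCLike 𝕜] [NormedAddCommGroup E] [InnerProductSpace 𝕜 E]
  {T₁ T₂ : E →ₗ[𝕜] E}

section FinsetIndexed

variable {ι₁ ι₂ ι₃ : Type*} [Fintype ι₁] [Fintype ι₂] [Fintype ι₃]
  {b₁ : OrthonormalBasis ι₁ 𝕜 E} {b₂ : OrthonormalBasis ι₂ 𝕜 E} {b₃ : OrthonormalBasis ι₃ 𝕜 E}
  {μ₁ : ι₁ → ℝ} {μ₂ : ι₂ → ℝ} {μ₃ : ι₃ → ℝ}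

theorem weyl_le_add_of_finrank_lt_card (h₁ : ∀ i, T₁ (b₁ i) = (μ₁ i : 𝕜) • b₁ i)
    (h₂ : ∀ i, T₂ (b₂ i) = (μ₂ i : 𝕜) • b₂ i) (h₃ : ∀ i, (T₁ + T₂) (b₃ i) = (μ₃ i : 𝕜) • b₃ i)
    {S₁ : Finset ι₁} {S₂ : Finset ι₂} {S₃ : Finset ι₃}
    (hcard : 2 * finrank 𝕜 E < #S₁ + #S₂ + #S₃) {c₁ c₂ c₃ : ℝ}
    (hc₁ : ∀ i ∈ S₁, μ₁ i ≤ c₁) (hc₂ : ∀ i ∈ S₂, μ₂ i ≤ c₂) (hc₃ : ∀ i ∈ S₃, c₃ ≤ μ₃ i) :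
    c₃ ≤ c₁ + c₂ := by
  have : FiniteDimensional 𝕜 E := Module.Finite.of_basis b₁.toBasis
  obtain ⟨x, ⟨⟨hx₁, hx₂⟩, hx₃⟩, hx⟩ := Submodule.exists_ne_zero_mem_inf_inf
    (Submodule.span 𝕜 (b₁ '' S₁)) (Submodule.span 𝕜 (b₂ '' S₂)) (Submodule.span 𝕜 (b₃ '' S₃))
    (by simpa only [OrthonormalBasis.finrank_span_image] using hcard)
  have hq₁ := b₁.re_inner_map_self_le_of_mem_span h₁ hc₁ hx₁
  have hq₂ := b₂.re_inner_map_self_le_of_mem_span h₂ hc₂ hx₂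
  have hq₃ := b₃.le_re_inner_map_self_of_mem_span h₃ hc₃ hx₃
  rw [LinearMap.add_apply, inner_add_right, map_add] at hq₃
  refine le_of_mul_le_mul_right ?_ (by positivity : 0 < ‖x‖ ^ 2)
  linarith

theorem weyl_add_le_of_finrank_lt_card (h₁ : ∀ i, T₁ (b₁ i) = (μ₁ i : 𝕜) • b₁ i)
    (h₂ : ∀ i, T₂ (b₂ i) = (μ₂ i : 𝕜) • b₂ i) (h₃ : ∀ i, (T₁ + T₂) (b₃ i) = (μ₃ i : 𝕜) • b₃ i)
    {S₁ : Finset ι₁} {S₂ : Finset ι₂} {S₃ : Finset ι₃}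
    (hcard : 2 * finrank 𝕜 E < #S₁ + #S₂ + #S₃) {c₁ c₂ c₃ : ℝ}
    (hc₁ : ∀ i ∈ S₁, c₁ ≤ μ₁ i) (hc₂ : ∀ i ∈ S₂, c₂ ≤ μ₂ i) (hc₃ : ∀ i ∈ S₃, μ₃ i ≤ c₃) :
    c₁ + c₂ ≤ c₃ := by
  have := weyl_le_add_of_finrank_lt_card (T₁ := -T₁) (T₂ := -T₂) (b₁ := b₁) (b₂ := b₂) (b₃ := b₃)
    (μ₁ := -μ₁) (μ₂ := -μ₂) (μ₃ := -μ₃) (by simp [h₁]) (by simp [h₂])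
    (fun i => by rw [← neg_add, LinearMap.neg_apply, h₃]; simp) hcard
    (fun i hi => neg_le_neg (hc₁ i hi)) (fun i hi => neg_le_neg (hc₂ i hi))
    (fun i hi => neg_le_neg (hc₃ i hi))
  linarith

end FinsetIndexed

variable {n : ℕ} {b₁ b₂ b₃ : OrthonormalBasis (Fin n) 𝕜 E} {μ₁ μ₂ μ₃ : Fin n → ℝ}

theorem weyl_eigenvalue_le_add (h₁ : ∀ i, T₁ (b₁ i) = (μ₁ i : 𝕜) • b₁ i)
    (h₂ : ∀ i, T₂ (b₂ i) = (μ₂ i : 𝕜) • b₂ i) (h₃ : ∀ i, (T₁ + T₂) (b₃ i) = (μ₃ i : 𝕜) • b₃ i)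
    (hμ₁ : Antitone μ₁) (hμ₂ : Antitone μ₂) (hμ₃ : Antitone μ₃) {i j k : Fin n}
    (hijk : (i : ℕ) + j ≤ k) : μ₃ k ≤ μ₁ i + μ₂ j := by
  refine weyl_le_add_of_finrank_lt_card h₁ h₂ h₃ (S₁ := Ici i) (S₂ := Ici j) (S₃ := Iic k) ?_
    (fun l hl => hμ₁ (mem_Ici.1 hl)) (fun l hl => hμ₂ (mem_Ici.1 hl))
    (fun l hl => hμ₃ (mem_Iic.1 hl))
  rw [finrank_eq_card_basis b₁.toBasis, Fintype.card_fin, Fin.card_Ici, Fin.card_Ici, Fin.card_Iic]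
  omega

theorem weyl_add_le_eigenvalue (h₁ : ∀ i, T₁ (b₁ i) = (μ₁ i : 𝕜) • b₁ i)
    (h₂ : ∀ i, T₂ (b₂ i) = (μ₂ i : 𝕜) • b₂ i) (h₃ : ∀ i, (T₁ + T₂) (b₃ i) = (μ₃ i : 𝕜) • b₃ i)
    (hμ₁ : Antitone μ₁) (hμ₂ : Antitone μ₂) (hμ₃ : Antitone μ₃) {i j k : Fin n}
    (hijk : k + n ≤ (i : ℕ) + j + 1) : μ₁ i + μ₂ j ≤ μ₃ k := by
  refine weyl_add_le_of_finrank_lt_card h₁ h₂ h₃ (S₁ := Iic i) (S₂ := Iic j) (S₃ := Ici k) ?_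
    (fun l hl => hμ₁ (mem_Iic.1 hl)) (fun l hl => hμ₂ (mem_Iic.1 hl))
    (fun l hl => hμ₃ (mem_Ici.1 hl))
  rw [finrank_eq_card_basis b₁.toBasis, Fintype.card_fin, Fin.card_Iic, Fin.card_Iic, Fin.card_Ici]
  omega

end Weyl

theorem eigsEq.exists_orthonormalBasis {n : ℕ} {A : Matrix (Fin n) (Fin n) ℂ}
    {hA : A.IsHermitian} {a : Fin n → ℝ} (h : eigsEq hA a) :
    ∃ b : OrthonormalBasis (Fin n) ℂ (EuclideanSpace ℂ (Fin n)),
      ∀ i, toEuclideanLin A (b i) = (a i : ℂ) • b i := by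
  obtain ⟨σ, hσ⟩ := h
  refine ⟨hA.eigenvectorBasis.reindex σ.symm, fun i => ?_⟩
  rw [OrthonormalBasis.reindex_apply, Equiv.symm_symm, ← hσ i]
  ext1
  simp [hA.mulVec_eigenvectorBasis]

theorem horn_n3_inequalities_general (α₁ α₂ α₃ β₁ β₂ β₃ γ₁ γ₂ γ₃ : ℝ)
    (hα : α₃ < α₂ ∧ α₂ < α₁) (hβ : β₃ < β₂ ∧ β₂ < β₁) (hγ : γ₃ ≤ γ₂ ∧ γ₂ ≤ γ₁)
    (A B : Matrix (Fin 3) (Fin 3) ℂ) (hA : A.IsHermitian) (hB : B.IsHermitian)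
    (hAe : eigsEq hA ![α₁, α₂, α₃]) (hBe : eigsEq hB ![β₁, β₂, β₃])
    (hCe : eigsEq (hA.add hB) ![γ₁, γ₂, γ₃]) :
    (α₃ + β₃ ≤ γ₃ ∧ γ₃ ≤ min (α₁ + β₃) (min (α₂ + β₂) (α₃ + β₁))) ∧
    (max (α₂ + β₃) (α₃ + β₂) ≤ γ₂ ∧ γ₂ ≤ min (α₁ + β₂) (α₂ + β₁)) ∧
    (max (α₁ + β₃) (max (α₂ + β₂) (α₃ + β₁)) ≤ γ₁ ∧ γ₁ ≤ α₁ + β₁) := by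
  obtain ⟨bA, hbA⟩ := hAe.exists_orthonormalBasis
  obtain ⟨bB, hbB⟩ := hBe.exists_orthonormalBasis
  obtain ⟨bC, hbC⟩ := hCe.exists_orthonormalBasis
  rw [map_add] at hbC
  have hα' : Antitone ![α₁, α₂, α₃] := by simp [antitone_vecCons, hα.1.le, hα.2.le]
  have hβ' : Antitone ![β₁, β₂, β₃] := by simp [antitone_vecCons, hβ.1.le, hβ.2.le]
  have hγ' : Antitone ![γ₁, γ₂, γ₃] := by simp [antitone_vecCons, hγ.1, hγ.2]
  have upper (i j k : Fin 3) (h : (i : ℕ) + j ≤ k) :=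
    weyl_eigenvalue_le_add hbA hbB hbC hα' hβ' hγ' h
  have lower (i j k : Fin 3) (h : k + 3 ≤ (i : ℕ) + j + 1) :=
    weyl_add_le_eigenvalue hbA hbB hbC hα' hβ' hγ' h
  exact ⟨⟨lower 2 2 2 (by decide), le_min (upper 0 2 2 (by decide))
      (le_min (upper 1 1 2 (by decide)) (upper 2 0 2 (by decide)))⟩,
    ⟨max_le (lower 1 2 1 (by decide)) (lower 2 1 1 (by decide)),
      le_min (upper 0 1 1 (by decide)) (upper 1 0 1 (by decide))⟩,
    ⟨max_le (lower 0 2 0 (by decide)) (max_le (lower 1 1 0 (by decide)) (lower 2 0 0 (by decide))),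
      upper 0 0 0 (by decide)⟩⟩

/-- Horn's inequalities for `n = 3`: necessary conditions on the ordered spectrum `γ` of the
sum of two Hermitian 3×3 matrices with ordered spectra `α` and `β`. -/
theorem horn_n3_inequalities (α₁ α₂ α₃ β₁ β₂ β₃ γ₁ γ₂ γ₃ : ℝ)
    (hα : α₃ < α₂ ∧ α₂ < α₁) (hβ : β₃ < β₂ ∧ β₂ < β₁) (hγ : γ₃ ≤ γ₂ ∧ γ₂ ≤ γ₁)
    (htr : γ₁ + γ₂ + γ₃ = α₁ + α₂ + α₃ + β₁ + β₂ + β₃)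
    (A B : Matrix (Fin 3) (Fin 3) ℂ) (hA : A.IsHermitian) (hB : B.IsHermitian)
    (hAe : eigsEq hA ![α₁, α₂, α₃]) (hBe : eigsEq hB ![β₁, β₂, β₃])
    (hCe : eigsEq (hA.add hB) ![γ₁, γ₂, γ₃]) :
    (α₃ + β₃ ≤ γ₃ ∧ γ₃ ≤ min (α₁ + β₃) (min (α₂ + β₂) (α₃ + β₁))) ∧
    (max (α₂ + β₃) (α₃ + β₂) ≤ γ₂ ∧ γ₂ ≤ min (α₁ + β₂) (α₂ + β₁)) ∧
    (max (α₁ + β₃) (max (α₂ + β₂) (α₃ + β₁)) ≤ γ₁ ∧ γ₁ ≤ α₁ + β₁) :=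
  horn_n3_inequalities_general α₁ α₂ α₃ β₁ β₂ β₃ γ₁ γ₂ γ₃ hα hβ hγ A B hA hB hAe hBe hCe
end

section
/- Define ψ_{αβ}(γ) piecewise on the three sectors: (i) (γ₂−α₃−β₁) − (γ₁−α₁−β₂) when γ₂ ≥ α₃+β₁ and γ₁ < α₁+β₂; (ii) (γ₃−α₂−β₃) − (γ₂−α₃−β₁) when γ₃ ≥ α₂+β₃ and γ₂ < α₃+β₁; (iii) (γ₁−α₁−β₂) − (γ₃−α₂−β₃) when γ₁ ≥ α₁+β₂ and γ₃ < α₂+β₃. Under the constraint γ₁+γ₂+γ₃ = Σαᵢ+Σβᵢ, the three sectors cover all cases except when all three thresholds are attained with equality pattern excluded, the definitions agree on overlaps, and ψ_{αβ} is a continuous function of (γ₁, γ₂) on the hyperplane γ₃ = Σαᵢ+Σβᵢ−γ₁−γ₂. -/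
open Classical

/-- The piecewise-linear function `ψ_{αβ}` on the hyperplane
`γ₁ + γ₂ + γ₃ = Σαᵢ + Σβᵢ`, viewed as a function of `(γ₁, γ₂)`, with
`γ₃ := Σαᵢ + Σβᵢ − γ₁ − γ₂`. -/
noncomputable def psiAB (α₁ α₂ α₃ β₁ β₂ β₃ : ℝ) (g : ℝ × ℝ) : ℝ :=
  let γ₁ := g.1
  let γ₂ := g.2
  let γ₃ := α₁ + α₂ + α₃ + β₁ + β₂ + β₃ - γ₁ - γ₂
  if α₃ + β₁ ≤ γ₂ ∧ γ₁ < α₁ + β₂ then (γ₂ - α₃ - β₁) - (γ₁ - α₁ - β₂)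
  else if α₂ + β₃ ≤ γ₃ ∧ γ₂ < α₃ + β₁ then (γ₃ - α₂ - β₃) - (γ₂ - α₃ - β₁)
  else (γ₁ - α₁ - β₂) - (γ₃ - α₂ - β₃)

lemma psiAB_eq_max (α₁ α₂ α₃ β₁ β₂ β₃ : ℝ) (g : ℝ × ℝ) :
    psiAB α₁ α₂ α₃ β₁ β₂ β₃ g =
      max (max ((g.2 - α₃ - β₁) - (g.1 - α₁ - β₂))
        (((α₁ + α₂ + α₃ + β₁ + β₂ + β₃ - g.1 - g.2) - α₂ - β₃) - (g.2 - α₃ - β₁)))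
        ((g.1 - α₁ - β₂) - ((α₁ + α₂ + α₃ + β₁ + β₂ + β₃ - g.1 - g.2) - α₂ - β₃)) := by
  set A := (g.2 - α₃ - β₁) - (g.1 - α₁ - β₂) with hA
  set B := ((α₁ + α₂ + α₃ + β₁ + β₂ + β₃ - g.1 - g.2) - α₂ - β₃) - (g.2 - α₃ - β₁) with hB
  set C := (g.1 - α₁ - β₂) - ((α₁ + α₂ + α₃ + β₁ + β₂ + β₃ - g.1 - g.2) - α₂ - β₃) with hC
  unfold psiAB
  dsimp only
  split_ifs with h1 h2
  · rw [max_eq_left, max_eq_left] <;> [skip; exact le_trans (by simp [hA, hB, hC]; linarith [h1.1, h1.2]) (le_max_left A B)]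
    simp only [hA, hB]; linarith [h1.1, h1.2]
  · push_neg at h1
    rw [max_eq_left, max_eq_right]
    · simp only [hA, hB]; linarith [h2.1, h2.2]
    · exact le_trans (by simp only [hB, hC]; linarith [h2.1, h2.2]) (le_max_right A B)
  · push_neg at h1 h2
    rw [max_eq_right]
    rcases le_or_gt (α₃ + β₁) g.2 with hy | hy
    · have hx := h1 hy
      apply max_le <;> [simp only [hA, hC]; simp only [hB, hC]] <;> linarith
    · have hz : α₁ + α₂ + α₃ + β₁ + β₂ + β₃ - g.1 - g.2 < α₂ + β₃ := by
        by_contra h; push_neg at h; linarith [h2 h]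
      apply max_le <;> [simp only [hA, hC]; simp only [hB, hC]] <;> linarith

/-- Under the trace constraint, the three sectors cover every point of the hyperplane except
the single center point where all three thresholds are attained; the piecewise definitions are
consistent, and `ψ_{αβ}` is a continuous function of `(γ₁, γ₂)`. -/
theorem psiAB_sectors_cover_and_continuous (α₁ α₂ α₃ β₁ β₂ β₃ : ℝ)
    (hα : α₃ ≤ α₂ ∧ α₂ ≤ α₁) (hβ : β₃ ≤ β₂ ∧ β₂ ≤ β₁) :
    (∀ γ₁ γ₂ : ℝ,
      (γ₁ = α₁ + β₂ ∧ γ₂ = α₃ + β₁ ∧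
        α₁ + α₂ + α₃ + β₁ + β₂ + β₃ - γ₁ - γ₂ = α₂ + β₃) ∨
      (α₃ + β₁ ≤ γ₂ ∧ γ₁ < α₁ + β₂) ∨
      (α₂ + β₃ ≤ α₁ + α₂ + α₃ + β₁ + β₂ + β₃ - γ₁ - γ₂ ∧ γ₂ < α₃ + β₁) ∨
      (α₁ + β₂ ≤ γ₁ ∧ α₁ + α₂ + α₃ + β₁ + β₂ + β₃ - γ₁ - γ₂ < α₂ + β₃)) ∧
    Continuous (psiAB α₁ α₂ α₃ β₁ β₂ β₃) := by
  constructor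
  · intro γ₁ γ₂
    rcases le_or_gt (α₃ + β₁) γ₂ with hy | hy
    · rcases lt_or_ge γ₁ (α₁ + β₂) with hx | hx
      · exact Or.inr (Or.inl ⟨hy, hx⟩)
      · rcases lt_or_ge (α₁ + α₂ + α₃ + β₁ + β₂ + β₃ - γ₁ - γ₂) (α₂ + β₃) with hz | hz
        · exact Or.inr (Or.inr (Or.inr ⟨hx, hz⟩))
        · exact Or.inl ⟨by linarith, by linarith, by linarith⟩
    · rcases le_or_gt (α₂ + β₃) (α₁ + α₂ + α₃ + β₁ + β₂ + β₃ - γ₁ - γ₂) with hz | hz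
      · exact Or.inr (Or.inr (Or.inl ⟨hz, hy⟩))
      · exact Or.inr (Or.inr (Or.inr ⟨by linarith, hz⟩))
  · have h : psiAB α₁ α₂ α₃ β₁ β₂ β₃ = fun g : ℝ × ℝ =>
      max (max ((g.2 - α₃ - β₁) - (g.1 - α₁ - β₂))
        (((α₁ + α₂ + α₃ + β₁ + β₂ + β₃ - g.1 - g.2) - α₂ - β₃) - (g.2 - α₃ - β₁)))
        ((g.1 - α₁ - β₂) - ((α₁ + α₂ + α₃ + β₁ + β₂ + β₃ - g.1 - g.2) - α₂ - β₃)) :=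
      funext (psiAB_eq_max α₁ α₂ α₃ β₁ β₂ β₃)
    rw [h]
    fun_prop
end

section
/- For real a > 0, b > 0 with a ≠ b, the function ρ(γ) = (2/π)·γ/√((（a+b)²−γ²)(γ²−(a−b)²)) for |a−b| < γ < a+b, and 0 otherwise, is integrable on ℝ and satisfies ∫_ℝ ρ(γ) dγ = 1. -/
open MeasureTheory Real

/-- The PDF of the eigenvalue gap for the sum of two 2×2 real symmetric matrices with gaps
`a ≠ b`. -/
noncomputable def symGapPDF (a b γ : ℝ) : ℝ :=
  if |a - b| < γ ∧ γ < a + b then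
    (2 / π) * γ / Real.sqrt (((a + b) ^ 2 - γ ^ 2) * (γ ^ 2 - (a - b) ^ 2))
  else 0

open Set

/-
With `c = |a - b|` and `d = a + b`, the substitution `u = (2γ² - c² - d²) / (d² - c²)` maps
`(c, d)` onto `(-1, 1)` and turns `2γ dγ / √((d² - γ²)(γ² - c²))` into `du / √(1 - u²)`.
Hence `arcsin u / π` is a primitive of the density, and it increases by exactly `1` from `c` to `d`.
-/

noncomputable def gapDensity (c d γ : ℝ) : ℝ :=
  (2 / π) * γ / √((d ^ 2 - γ ^ 2) * (γ ^ 2 - c ^ 2))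

noncomputable def gapPrimitive (c d γ : ℝ) : ℝ :=
  arcsin ((2 * γ ^ 2 - (c ^ 2 + d ^ 2)) / (d ^ 2 - c ^ 2)) / π

theorem continuous_gapPrimitive (c d : ℝ) : Continuous (gapPrimitive c d) := by
  unfold gapPrimitive
  fun_prop

theorem hasDerivAt_gapPrimitive {c d γ : ℝ} (hc : c ^ 2 < γ ^ 2) (hd : γ ^ 2 < d ^ 2) :
    HasDerivAt (gapPrimitive c d) (gapDensity c d γ) γ := by
  have hdc : 0 < d ^ 2 - c ^ 2 := by linarith
  have hP : 0 < (d ^ 2 - γ ^ 2) * (γ ^ 2 - c ^ 2) := mul_pos (by linarith) (by linarith)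
  set u := (2 * γ ^ 2 - (c ^ 2 + d ^ 2)) / (d ^ 2 - c ^ 2)
  have hu_lt : u < 1 := by rw [div_lt_one hdc]; linarith
  have hu_gt : -1 < u := by rw [lt_div_iff₀ hdc]; linarith
  have hsqrt : √(1 - u ^ 2) = 2 * √((d ^ 2 - γ ^ 2) * (γ ^ 2 - c ^ 2)) / (d ^ 2 - c ^ 2) := by
    have : 1 - u ^ 2 = (2 * √((d ^ 2 - γ ^ 2) * (γ ^ 2 - c ^ 2)) / (d ^ 2 - c ^ 2)) ^ 2 := by
      rw [div_pow, div_pow, mul_pow, sq_sqrt hP.le]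
      field_simp
      ring
    rw [this, sqrt_sq (by positivity)]
  have hinner : HasDerivAt (fun γ : ℝ ↦ (2 * γ ^ 2 - (c ^ 2 + d ^ 2)) / (d ^ 2 - c ^ 2))
      (2 * (2 * γ) / (d ^ 2 - c ^ 2)) γ := by
    simpa using (((hasDerivAt_pow 2 γ).const_mul 2).sub_const (c ^ 2 + d ^ 2)).div_const _
  refine (((hasDerivAt_arcsin hu_gt.ne' hu_lt.ne).comp γ hinner).div_const π).congr_deriv ?_
  rw [hsqrt, gapDensity]
  field_simp [(sqrt_pos.2 hP).ne']

theorem gapPrimitive_sub {c d : ℝ} (hcd : c ^ 2 ≠ d ^ 2) :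
    gapPrimitive c d d - gapPrimitive c d c = 1 := by
  have hdc : d ^ 2 - c ^ 2 ≠ 0 := sub_ne_zero.2 hcd.symm
  have hd : (2 * d ^ 2 - (c ^ 2 + d ^ 2)) / (d ^ 2 - c ^ 2) = 1 := by
    rw [div_eq_one_iff_eq hdc]; ring
  have hc : (2 * c ^ 2 - (c ^ 2 + d ^ 2)) / (d ^ 2 - c ^ 2) = -1 := by
    rw [div_eq_iff hdc]; ring
  rw [gapPrimitive, gapPrimitive, hd, hc, arcsin_one, arcsin_neg_one]
  field_simp
  ring

section Interval

variable {c d : ℝ}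

theorem hasDerivAt_gapPrimitive_of_mem_Ioo (hc : 0 ≤ c) {γ : ℝ} (hγ : γ ∈ Ioo c d) :
    HasDerivAt (gapPrimitive c d) (gapDensity c d γ) γ :=
  hasDerivAt_gapPrimitive (pow_lt_pow_left₀ hγ.1 hc two_ne_zero)
    (pow_lt_pow_left₀ hγ.2 (hc.trans hγ.1.le) two_ne_zero)

theorem gapDensity_nonneg (hc : 0 ≤ c) {γ : ℝ} (hγ : γ ∈ Ioo c d) : 0 ≤ gapDensity c d γ := by
  have : 0 ≤ γ := hc.trans hγ.1.le
  unfold gapDensity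
  positivity

theorem integrableOn_gapDensity (hc : 0 ≤ c) : IntegrableOn (gapDensity c d) (Ioc c d) :=
  intervalIntegral.integrableOn_deriv_of_nonneg (continuous_gapPrimitive c d).continuousOn
    (fun _ ↦ hasDerivAt_gapPrimitive_of_mem_Ioo hc) (fun _ ↦ gapDensity_nonneg hc)

theorem integral_gapDensity (hc : 0 ≤ c) (hcd : c < d) :
    ∫ γ in Ioo c d, gapDensity c d γ = 1 := by
  have hsq : c ^ 2 ≠ d ^ 2 := (pow_lt_pow_left₀ hcd hc two_ne_zero).ne
  rw [← integral_Ioc_eq_integral_Ioo, ← intervalIntegral.integral_of_le hcd.le,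
    intervalIntegral.integral_eq_sub_of_hasDeriv_right_of_le hcd.le
      (continuous_gapPrimitive c d).continuousOn
      (fun _ hγ ↦ (hasDerivAt_gapPrimitive_of_mem_Ioo hc hγ).hasDerivWithinAt)
      ((intervalIntegrable_iff_integrableOn_Ioc_of_le hcd.le).2 (integrableOn_gapDensity hc)),
    gapPrimitive_sub hsq]

end Interval

theorem symGapPDF_eq_indicator (a b : ℝ) :
    symGapPDF a b = (Ioo |a - b| (a + b)).indicator (gapDensity |a - b| (a + b)) := by
  ext γ
  simp only [symGapPDF, indicator, mem_Ioo, gapDensity, sq_abs]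

theorem symGapPDF_is_density_general (a b : ℝ) (ha : 0 < a) (hb : 0 < b) :
    Integrable (symGapPDF a b) ∧ ∫ γ : ℝ, symGapPDF a b γ = 1 := by
  have hc : 0 ≤ |a - b| := abs_nonneg _
  have hcd : |a - b| < a + b := abs_lt.2 ⟨by linarith, by linarith⟩
  rw [symGapPDF_eq_indicator, integrable_indicator_iff measurableSet_Ioo,
    integral_indicator measurableSet_Ioo]
  exact ⟨(integrableOn_gapDensity hc).mono_set Ioo_subset_Ioc_self, integral_gapDensity hc hcd⟩

/-- `symGapPDF a b` is integrable on `ℝ` and integrates to `1`. -/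
theorem symGapPDF_is_density (a b : ℝ) (ha : 0 < a) (hb : 0 < b) (hab : a ≠ b) :
    Integrable (symGapPDF a b) ∧ ∫ γ : ℝ, symGapPDF a b γ = 1 :=
  symGapPDF_is_density_general a b ha hb
end

section
/- For real x₁, …, xₙ and α₁, …, αₙ, the n×n determinant det(e^{i xᵢ αⱼ}) satisfies det(e^{i xᵢ αⱼ}) = exp(i·(Σⱼ xⱼ)(Σₖ αₖ)/n) · Σ_{P ∈ Sₙ} ε_P ∏_{j=1}^{n−1} exp( i·(xⱼ − xⱼ₊₁)·( Σ_{k=1}^{j} α_{P(k)} − (j/n)·Σ_{k=1}^{n} αₖ ) ). -/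
/-!
Expanding the determinant over permutations, the term of `P` is `exp (i ∑ⱼ xⱼ α_{P j})`. Abel
summation against the gaps `xⱼ - xⱼ₊₁` splits this exponent into `(∑ x)(∑ α)/n`, which does not
depend on `P` and factors out, plus `∑ⱼ (xⱼ - xⱼ₊₁) ∑_{k ≤ j} (α_{P k} - ᾱ)` with `ᾱ` the mean of
the `α`s; centring the partial sums is what makes the boundary term of the summation vanish.
-/

open Matrix Complex Finset

namespace Fin

theorem sum_filter_le_castSucc_sub_succ {M : Type*} [AddCommGroup M] {m : ℕ}
    (x : Fin (m + 1) → M) (k : Fin (m + 1)) :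
    ∑ j : Fin m with k ≤ j.castSucc, (x j.castSucc - x j.succ) = x k - x (last m) := by
  induction k using reverseInduction with
  | last => simp [(castSucc_lt_last _).not_ge]
  | cast i ih =>
    have hsplit : ∀ j : Fin m, i.castSucc ≤ j.castSucc ↔ j = i ∨ i.succ ≤ j.castSucc := by
      intro j
      rw [castSucc_le_castSucc_iff, succ_le_castSucc_iff, le_iff_eq_or_lt, eq_comm]
    rw [filter_congr fun j _ => hsplit j, filter_or, filter_eq', if_pos (mem_univ i),
      sum_union (by simp [succ_le_castSucc_iff]), sum_singleton, ih, sub_add_sub_cancel]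

theorem sum_sub_succ_mul_sum_Iic {R : Type*} [Ring R] {m : ℕ} (x b : Fin (m + 1) → R) :
    ∑ j : Fin m, (x j.castSucc - x j.succ) * ∑ k ∈ Iic j.castSucc, b k =
      ∑ k, (x k - x (last m)) * b k := by
  simp_rw [mul_sum, ← sum_filter_le_castSucc_sub_succ x, sum_mul]
  exact sum_comm' fun j k => by simp

theorem sum_mul_eq_centerOfMass_add_relative {K : Type*} [Field K] [CharZero K] {m : ℕ}
    (x a : Fin (m + 1) → K) :
    ∑ i, x i * a i = (∑ i, x i) * (∑ i, a i) / (m + 1) +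
      ∑ j : Fin m, (x j.castSucc - x j.succ) *
        ((∑ k ∈ Iic j.castSucc, a k) - ((j : K) + 1) / (m + 1) * ∑ i, a i) := by
  have hcentered : ∀ j : Fin m,
      (∑ k ∈ Iic j.castSucc, a k) - ((j : K) + 1) / (m + 1) * ∑ i, a i =
        ∑ k ∈ Iic j.castSucc, (a k - (∑ i, a i) / (m + 1)) := fun j => by
    rw [sum_sub_distrib, Finset.sum_const, card_Iic, val_castSucc, nsmul_eq_mul]
    push_cast
    ring
  simp_rw [hcentered, sum_sub_succ_mul_sum_Iic]
  simp only [sub_mul, mul_sub, sum_sub_distrib, ← sum_mul, ← mul_sum, Finset.sum_const,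
    Finset.card_fin, nsmul_eq_mul, Nat.cast_add_one]
  field_simp
  ring

end Fin

/-- Here `n = m + 1` and indices are `0`-based: the paper's index `j` is `j + 1`. -/
theorem hciz_det_factorization (m : ℕ) (x α : Fin (m + 1) → ℝ) :
    (Matrix.of fun k l : Fin (m + 1) => Complex.exp (Complex.I * x k * α l)).det =
      Complex.exp (Complex.I * (∑ j, (x j : ℂ)) * (∑ k, (α k : ℂ)) / (m + 1)) *
        ∑ P : Equiv.Perm (Fin (m + 1)), (Equiv.Perm.sign P : ℂ) *
          ∏ j : Fin m,
            Complex.exp (Complex.I * ((x j.castSucc : ℂ) - (x j.succ : ℂ)) *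
              ((∑ k ∈ Finset.Iic (j.castSucc : Fin (m + 1)), (α (P k) : ℂ)) -
                (((j : ℕ) + 1 : ℂ) / (m + 1)) * ∑ k, (α k : ℂ))) := by
  rw [← det_transpose, det_apply', mul_sum]
  refine sum_congr rfl fun P _ => ?_
  have hexponent :=
    Fin.sum_mul_eq_centerOfMass_add_relative (fun i => (x i : ℂ)) (fun i => (α (P i) : ℂ))
  rw [Equiv.sum_comp P (fun k => (α k : ℂ))] at hexponent
  simp only [transpose_apply, of_apply]
  rw [mul_left_comm, ← exp_sum, ← exp_sum, ← exp_add]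
  congr 2
  simp only [mul_assoc, ← mul_sum]
  rw [hexponent]
  ring
end

section
/- Let a₁ > a₂ > 0 and b₁ > b₂ > 0, and define intervals I = (|（a₁+a₂)−(b₁+b₂)|, (a₁+a₂)+(b₁+b₂)) and I' = (|（a₁−a₂)−(b₁−b₂)|, (a₁−a₂)+(b₁−b₂)). Then the function p(γ₁,γ₂) = (1/8)·Δ_O(γ)/(Δ_O(a)Δ_O(b)) · (𝟙_I(γ₁+γ₂) − 𝟙_{−I}(γ₁+γ₂))·(𝟙_{I'}(γ₁−γ₂) − 𝟙_{−I'}(γ₁−γ₂)), where Δ_O(x) = x₁² − x₂², integrates to 1 over ℝ². -/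
/-!
Since `γ₁² - γ₂² = (γ₁ + γ₂)(γ₁ - γ₂)`, in the coordinates `u = γ₁ + γ₂`, `v = γ₁ - γ₂`
(Jacobian `1/2`) the density splits as a product of `u (𝟙_I(u) - 𝟙_{-I}(u))` and
`v (𝟙_{I'}(v) - 𝟙_{-I'}(v))`. For `J = (a, b)` the odd function `u (𝟙_J - 𝟙_{-J})` integrates
to `b² - a²`, which is `4AB` for `J = (|A - B|, A + B)`. The two factors thus give
`16 (a₁² - a₂²)(b₁² - b₂²)`, which cancels the constant `1 / (8 · 2 · Δ_O(a) Δ_O(b))`.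
-/

open MeasureTheory Set

/-- Real-valued indicator of a set of reals. -/
noncomputable def ind (s : Set ℝ) (x : ℝ) : ℝ := s.indicator 1 x

noncomputable def addSubLinearMap : (ℝ × ℝ) →ₗ[ℝ] ℝ × ℝ :=
  (LinearMap.fst ℝ ℝ ℝ + LinearMap.snd ℝ ℝ ℝ).prod (LinearMap.fst ℝ ℝ ℝ - LinearMap.snd ℝ ℝ ℝ)

lemma det_addSubLinearMap : LinearMap.det addSubLinearMap = -2 := by
  rw [← LinearMap.det_toMatrix (Module.Basis.finTwoProd ℝ), Matrix.det_fin_two]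
  norm_num [LinearMap.toMatrix_apply, addSubLinearMap]

lemma integral_comp_add_sub {E : Type*} [NormedAddCommGroup E] [NormedSpace ℝ E]
    (F : ℝ × ℝ → E) :
    ∫ γ : ℝ × ℝ, F (γ.1 + γ.2, γ.1 - γ.2) = (2 : ℝ)⁻¹ • ∫ p, F p := by
  have hdet : LinearMap.det addSubLinearMap ≠ 0 := by rw [det_addSubLinearMap]; norm_num
  let e := (addSubLinearMap.equivOfDetNeZero hdet).toContinuousLinearEquiv.toHomeomorph
    |>.toMeasurableEquiv
  calc ∫ γ : ℝ × ℝ, F (γ.1 + γ.2, γ.1 - γ.2) = ∫ γ, F (e γ) := rfl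
    _ = ∫ p, F p ∂(Measure.map e volume) := (integral_map_equiv e F).symm
    _ = (2 : ℝ)⁻¹ • ∫ p, F p := by
      rw [show (e : ℝ × ℝ → ℝ × ℝ) = addSubLinearMap from rfl,
        Measure.map_linearMap_addHaar_eq_smul_addHaar _ hdet, integral_smul_measure,
        det_addSubLinearMap]
      norm_num

lemma integral_mul_indicator_Ioo_sub_neg {a b : ℝ} (hab : a ≤ b) :
    ∫ u, u * (ind (Ioo a b) u - ind (Ioo (-b) (-a)) u) = b ^ 2 - a ^ 2 := by
  have hint : ∀ c d : ℝ, Integrable ((Ioo c d).indicator id) :=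
    fun c d => (integrable_indicator_iff measurableSet_Ioo).2
      (continuous_id.integrableOn_Icc.mono_set Ioo_subset_Icc_self)
  have hsplit : (fun u : ℝ => u * (ind (Ioo a b) u - ind (Ioo (-b) (-a)) u)) =
      fun u => (Ioo a b).indicator id u - (Ioo (-b) (-a)).indicator id u := by
    funext u
    simp only [ind, indicator_apply, Pi.one_apply, id]
    split_ifs <;> ring
  have hIoo : ∀ c d : ℝ, c ≤ d → ∫ u, (Ioo c d).indicator id u = (d ^ 2 - c ^ 2) / 2 := by
    intro c d hcd
    rw [integral_indicator measurableSet_Ioo, ← integral_Ioc_eq_integral_Ioo,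
      ← intervalIntegral.integral_of_le hcd]
    exact integral_id
  rw [hsplit, integral_sub (hint _ _) (hint _ _), hIoo a b hab, hIoo (-b) (-a) (neg_le_neg hab)]
  ring

/-- The `SO(4)` skew-symmetric Horn PDF integrates to `1` over `ℝ²`. Here
`I = (|(a₁+a₂)−(b₁+b₂)|, (a₁+a₂)+(b₁+b₂))`, `I' = (|(a₁−a₂)−(b₁−b₂)|, (a₁−a₂)+(b₁−b₂))`,
and `Δ_O(x) = x₁² − x₂²`. -/
theorem so4_skew_pdf_normalized (a₁ a₂ b₁ b₂ : ℝ) (ha : a₂ < a₁) (ha₂ : 0 < a₂)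
    (hb : b₂ < b₁) (hb₂ : 0 < b₂) :
    ∫ γ : ℝ × ℝ,
      (1 / 8) * ((γ.1 ^ 2 - γ.2 ^ 2) / ((a₁ ^ 2 - a₂ ^ 2) * (b₁ ^ 2 - b₂ ^ 2))) *
        ((ind (Ioo |(a₁ + a₂) - (b₁ + b₂)| ((a₁ + a₂) + (b₁ + b₂))) (γ.1 + γ.2) -
            ind (Ioo (-((a₁ + a₂) + (b₁ + b₂))) (-|(a₁ + a₂) - (b₁ + b₂)|)) (γ.1 + γ.2)) *
          (ind (Ioo |(a₁ - a₂) - (b₁ - b₂)| ((a₁ - a₂) + (b₁ - b₂))) (γ.1 - γ.2) -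
            ind (Ioo (-((a₁ - a₂) + (b₁ - b₂))) (-|(a₁ - a₂) - (b₁ - b₂)|)) (γ.1 - γ.2))) = 1 := by
  let f : ℝ → ℝ → ℝ → ℝ := fun A B u =>
    u * (ind (Ioo |A - B| (A + B)) u - ind (Ioo (-(A + B)) (-|A - B|)) u)
  have hf : ∀ A B : ℝ, 0 ≤ A → 0 ≤ B → ∫ u, f A B u = 4 * A * B := fun A B hA hB => by
    rw [integral_mul_indicator_Ioo_sub_neg (abs_sub_le_iff.2 ⟨by linarith, by linarith⟩), sq_abs]
    ring
  have hDa : a₁ ^ 2 - a₂ ^ 2 ≠ 0 := by nlinarith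
  have hDb : b₁ ^ 2 - b₂ ^ 2 ≠ 0 := by nlinarith
  calc _ = ∫ γ : ℝ × ℝ, (8 * ((a₁ ^ 2 - a₂ ^ 2) * (b₁ ^ 2 - b₂ ^ 2)))⁻¹ *
        (f (a₁ + a₂) (b₁ + b₂) (γ.1 + γ.2) * f (a₁ - a₂) (b₁ - b₂) (γ.1 - γ.2)) := by
        congr 1 with γ
        field_simp
        ring
    _ = (8 * ((a₁ ^ 2 - a₂ ^ 2) * (b₁ ^ 2 - b₂ ^ 2)))⁻¹ * (2⁻¹ *
        ((∫ u, f (a₁ + a₂) (b₁ + b₂) u) * ∫ v, f (a₁ - a₂) (b₁ - b₂) v)) := by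
        rw [integral_const_mul, integral_comp_add_sub (fun p => f _ _ p.1 * f _ _ p.2),
          Measure.volume_eq_prod, integral_prod_mul, smul_eq_mul]
    _ = 1 := by
        rw [hf _ _ (by linarith) (by linarith), hf _ _ (by linarith) (by linarith)]
        field_simp
        ring
end
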